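/- arXiv:1504.07348 — 7 statements merged into one kernel-verified Lean document; each statement's English description precedes it below -/
import Mathlib

section
/- Fix n ≥ 2 and define c(n,i) = (1/(i+1)) · C(n-i-2, i) · C(n, i). Then the sequence c(n,0), c(n,1), ..., c(n, ⌊n/2⌋ - 1) is strictly log concave: for all 0 < i < ⌊n/2⌋ - 1, c(n,i)^2 > c(n,i-1) · c(n,i+1). -/
/-!
Since `C(n, i) / (i + 1) = C(n + 1, i + 1) / (n + 1)`, the sequence `c(n, i)` is, up to the
constant factor `1 / (n + 1)`, the product of the row `C(n + 1, i + 1)` of Pascal's triangle and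
the shallow diagonal `C(n - 2 - i, i)`. Both are strictly log concave on the relevant range,
because the ratio of consecutive terms, `(N - j) / (j + 1)` resp.
`(m - 2k)(m - 2k - 1) / ((k + 1)(m - k))`, strictly decreases; hence so is their product.
-/

/-- The Kazhdan-Lusztig coefficient `c(n,i) = (1/(i+1)) · C(n-i-2, i) · C(n, i)`
of the uniform matroid of rank `n-1` on `n` elements, as a rational number. -/
noncomputable def cKL (n i : ℕ) : ℚ :=
  (1 / (i + 1 : ℚ)) * (Nat.choose (n - i - 2) i) * (Nat.choose n i)

namespace Nat

theorem mul_lt_sq_of_ratio_lt {a b c p q p' q' : ℕ} (hab : b * q = a * p) (hbc : c * q' = b * p')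
    (hq : 0 < q) (hb : 0 < b) (hratio : p' * q < p * q') : a * c < b ^ 2 := by
  have hp : 0 < p := Nat.pos_of_mul_pos_left (hab ▸ Nat.mul_pos hb hq)
  refine Nat.lt_of_mul_lt_mul_right (a := p * q') ?_
  calc a * c * (p * q') = b ^ 2 * (p' * q) := by
        rw [show a * c * (p * q') = (a * p) * (c * q') by ring, ← hab, hbc]; ring
    _ < b ^ 2 * (p * q') := Nat.mul_lt_mul_of_pos_left hratio (by positivity)

theorem choose_mul_choose_add_two_lt_sq {N j : ℕ} (hj : j < N) :
    N.choose j * N.choose (j + 2) < N.choose (j + 1) ^ 2 := by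
  obtain ⟨y, rfl⟩ : ∃ y, N = j + 1 + y := ⟨N - (j + 1), by omega⟩
  refine mul_lt_sq_of_ratio_lt (q := j + 1) (p := y + 1) (q' := j + 2) (p' := y) ?_ ?_
    (by omega) (choose_pos (by omega)) (by nlinarith)
  · rw [choose_succ_right_eq]; congr 1; omega
  · rw [choose_succ_right_eq]; congr 1; omega

theorem add_choose_succ_mul (y k : ℕ) :
    (y + k).choose (k + 1) * ((k + 1) * (y + k + 1)) = (y + k + 1).choose k * ((y + 1) * y) := by
  have h1 := choose_succ_right_eq (y + k) k
  have h2 := choose_mul_succ_eq (y + k) k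
  rw [Nat.add_sub_cancel] at h1
  rw [show y + k + 1 - k = y + 1 by omega] at h2
  calc (y + k).choose (k + 1) * ((k + 1) * (y + k + 1))
      = (y + k).choose (k + 1) * (k + 1) * (y + k + 1) := by ring
    _ = (y + k).choose k * (y + k + 1) * y := by rw [h1]; ring
    _ = _ := by rw [h2]; ring

theorem choose_sub_mul_choose_sub_lt_sq {m k : ℕ} (h : 2 * k + 4 ≤ m) :
    (m - k).choose k * (m - (k + 2)).choose (k + 2) < (m - (k + 1)).choose (k + 1) ^ 2 := by
  obtain ⟨x, rfl⟩ : ∃ x, m = x + 2 * k + 4 := ⟨m - (2 * k + 4), by omega⟩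
  rw [show x + 2 * k + 4 - k = x + 3 + k + 1 by omega,
    show x + 2 * k + 4 - (k + 1) = x + 3 + k by omega,
    show x + 2 * k + 4 - (k + 2) = x + 1 + (k + 1) by omega]
  have hbc := add_choose_succ_mul (x + 1) (k + 1)
  rw [show x + 1 + 1 = x + 2 by ring, show x + 1 + (k + 1) + 1 = x + 3 + k by ring] at hbc
  exact mul_lt_sq_of_ratio_lt (add_choose_succ_mul (x + 3) k) hbc (by positivity)
    (choose_pos (by omega))
    (Nat.mul_lt_mul_of_lt_of_le (by nlinarith) (by nlinarith) (by positivity))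

end Nat

theorem cKL_eq_choose_mul_choose_div (n i : ℕ) :
    cKL n i = ((n + 1).choose (i + 1) * (n - i - 2).choose i : ℕ) / (n + 1) := by
  have h : ((n + 1 : ℕ) * n.choose i : ℚ) = ((n + 1).choose (i + 1) * (i + 1) : ℕ) := by
    exact_mod_cast Nat.add_one_mul_choose_eq n i
  rw [cKL]
  push_cast at h ⊢
  field_simp
  linear_combination (n - i - 2).choose i * h

theorem stmt_1_general (n : ℕ) (i : ℕ) (hi0 : 0 < i) (hi : i < n / 2 - 1) :
    cKL n i ^ 2 > cKL n (i - 1) * cKL n (i + 1) := by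
  obtain ⟨k, rfl⟩ : ∃ k, i = k + 1 := ⟨i - 1, by omega⟩
  have hrow := Nat.choose_mul_choose_add_two_lt_sq (N := n + 1) (j := k + 1) (by omega)
  have hdiag := Nat.choose_sub_mul_choose_sub_lt_sq (m := n - 2) (k := k) (by omega)
  have hsub : ∀ j, n - 2 - j = n - j - 2 := fun j => by omega
  simp only [hsub] at hdiag
  rw [cKL_eq_choose_mul_choose_div, cKL_eq_choose_mul_choose_div, cKL_eq_choose_mul_choose_div,
    Nat.add_sub_cancel, div_mul_div_comm, div_pow, ← sq, gt_iff_lt,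
    div_lt_div_iff_of_pos_right (by positivity)]
  have hprod := Nat.mul_lt_mul'' hrow hdiag
  exact_mod_cast (by convert hprod using 1 <;> ring)

/-- For `n ≥ 2`, the sequence `c(n,0), …, c(n, ⌊n/2⌋ - 1)` is strictly log concave:
for all `0 < i < ⌊n/2⌋ - 1`, `c(n,i)^2 > c(n,i-1) · c(n,i+1)`. -/
theorem stmt_1 (n : ℕ) (hn : 2 ≤ n) (i : ℕ) (hi0 : 0 < i) (hi : i < n / 2 - 1) :
    cKL n i ^ 2 > cKL n (i - 1) * cKL n (i + 1) :=
  stmt_1_general n i hi0 hi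
end

section
/- The quantity (1/(i+1)) · C(n-i-2, i) · C(n, i) is a nonnegative integer for all integers n ≥ 2 and i ≥ 0; that is, (i+1) divides C(n-i-2, i) · C(n, i). -/
/-!
Both `(n - i) * C(n, i) = (i + 1) * C(n, i + 1)` and
`(n - i - 1) * C(n - i - 2, i) = (i + 1) * C(n - i - 1, i + 1)` are multiples of `i + 1`.
Multiplying the first by `C(n - i - 2, i)` and the second by `C(n, i)`, the two products differ
by exactly `C(n - i - 2, i) * C(n, i)`, because the factors `n - i` and `n - i - 1` differ by one.
-/

theorem dvd_mul_of_dvd_mul_add_one_of_dvd_mul {d a b k : ℕ}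
    (ha : d ∣ a * (k + 1)) (hb : d ∣ b * k) : d ∣ a * b := by
  have hk : d ∣ a * b * k := mul_assoc a b k ▸ hb.mul_left a
  have hsum : d ∣ a * b * k + a * b := by
    have : a * (k + 1) * b = a * b * k + a * b := by ring
    exact this ▸ ha.mul_right b
  exact (Nat.dvd_add_right hk).mp hsum

theorem Nat.succ_dvd_choose_mul_sub (n i : ℕ) : i + 1 ∣ n.choose i * (n - i) :=
  Nat.choose_succ_right_eq n i ▸ dvd_mul_left _ _

theorem Nat.succ_dvd_choose_mul_succ (m i : ℕ) : i + 1 ∣ m.choose i * (m + 1) := by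
  rw [mul_comm, Nat.add_one_mul_choose_eq]
  exact dvd_mul_left _ _

theorem Nat.succ_dvd_choose_add_two_mul_choose (m i : ℕ) :
    i + 1 ∣ (m + i + 2).choose i * m.choose i := by
  refine dvd_mul_of_dvd_mul_add_one_of_dvd_mul (k := m + 1) ?_ (Nat.succ_dvd_choose_mul_succ m i)
  simpa [show m + i + 2 - i = m + 1 + 1 by omega] using Nat.succ_dvd_choose_mul_sub (m + i + 2) i

theorem stmt_4_general (n i : ℕ) :
    (i + 1) ∣ Nat.choose (n - i - 2) i * Nat.choose n i := by
  rcases le_or_gt (i + 2) n with h | h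
  · obtain ⟨m, rfl⟩ : ∃ m, n = m + i + 2 := ⟨n - i - 2, by omega⟩
    rw [show m + i + 2 - i - 2 = m by omega, mul_comm]
    exact Nat.succ_dvd_choose_add_two_mul_choose m i
  · rw [show n - i - 2 = 0 by omega]
    rcases i with _ | i <;> simp

/-- For all integers `n ≥ 2` and `i ≥ 0`, the quantity
`(1/(i+1)) · C(n-i-2, i) · C(n, i)` is a nonnegative integer; that is,
`(i+1)` divides `C(n-i-2, i) · C(n, i)`. -/
theorem stmt_4 (n i : ℕ) (hn : 2 ≤ n) :
    (i + 1) ∣ Nat.choose (n - i - 2) i * Nat.choose n i :=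
  stmt_4_general n i
end

section
/- Let g(t,u) = (2/u) · ((2tu+1)u + sqrt(1 - 2(2tu+1)u + u²) - 1) / (1 - (2tu+1)²), viewed as a formal power series in u with coefficients polynomials in t (or as an analytic function near u = 0). Then g satisfies the functional equation g(t^{-1}, tu) = (tu - u)/((1 - tu + u)(1 + u)) + (1/(1 - tu + u)²) · g(t, u/(1 - tu + u)). -/
/-!
Both square roots in the functional equation are the same one: the radicand of `g(t⁻¹, tu)` is
`D = 1 - 2tu - 4tu² + t²u²`, and that of `g(t, u/w)` with `w = 1 - tu + u` is `D / w²`, whose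
square root is `√D / w` because `w > 0`. Once `√D` is replaced by an indeterminate `s`, the
functional equation becomes an identity of rational functions in `t, u, s`.
-/

/-- The generating function
`g(t,u) = (2/u) · ((2tu+1)u + sqrt(1 - 2(2tu+1)u + u²) - 1) / (1 - (2tu+1)²)`,
viewed as a real function (`sqrt` is the usual real square root, which agrees with the
branch equal to `1` at `u = 0`). -/
noncomputable def gKL (t u : ℝ) : ℝ :=
  (2 / u) * (((2 * t * u + 1) * u + Real.sqrt (1 - 2 * (2 * t * u + 1) * u + u ^ 2) - 1)
    / (1 - (2 * t * u + 1) ^ 2))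

noncomputable def gKLOfSqrt (t u s : ℝ) : ℝ :=
  (2 / u) * (((2 * t * u + 1) * u + s - 1) / (1 - (2 * t * u + 1) ^ 2))

theorem gKL_eq_gKLOfSqrt (t u : ℝ) :
    gKL t u = gKLOfSqrt t u (Real.sqrt (1 - 2 * (2 * t * u + 1) * u + u ^ 2)) := rfl

theorem gKL_inv_mul {t : ℝ} (ht : t ≠ 0) (u : ℝ) :
    gKL t⁻¹ (t * u) =
      gKLOfSqrt t⁻¹ (t * u) (Real.sqrt (1 - 2 * t * u - 4 * t * u ^ 2 + t ^ 2 * u ^ 2)) := by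
  rw [gKL_eq_gKLOfSqrt]
  congr 2
  field_simp
  ring

theorem gKL_div {w : ℝ} (t u : ℝ) (hw : 0 < w) (hw_eq : w = 1 - t * u + u) :
    gKL t (u / w) =
      gKLOfSqrt t (u / w) (Real.sqrt (1 - 2 * t * u - 4 * t * u ^ 2 + t ^ 2 * u ^ 2) / w) := by
  have hradicand : 1 - 2 * (2 * t * (u / w) + 1) * (u / w) + (u / w) ^ 2
      = (1 - 2 * t * u - 4 * t * u ^ 2 + t ^ 2 * u ^ 2) / w ^ 2 := by
    subst hw_eq
    field_simp
    ring
  rw [gKL_eq_gKLOfSqrt, hradicand, Real.sqrt_div' _ (sq_nonneg w), Real.sqrt_sq hw.le]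

theorem gKLOfSqrt_functional_equation {t u w : ℝ} (s : ℝ) (ht : t ≠ 0) (hu : u ≠ 0)
    (hu1 : 1 + u ≠ 0) (hw : w ≠ 0) (hw_eq : w = 1 - t * u + u) :
    gKLOfSqrt t⁻¹ (t * u) s =
      (t * u - u) / (w * (1 + u)) + (1 / w ^ 2) * gKLOfSqrt t (u / w) (s / w) := by
  have hden_left : 1 - (2 * t⁻¹ * (t * u) + 1) ^ 2 = -4 * u * (1 + u) := by
    field_simp
    ring
  have hden_right : 1 - (2 * t * (u / w) + 1) ^ 2 = -4 * t * u * (1 + u) / w ^ 2 := by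
    subst hw_eq
    field_simp
    ring
  unfold gKLOfSqrt
  rw [hden_left, hden_right]
  subst hw_eq
  field_simp
  ring

theorem stmt_7_general (t u : ℝ) (ht : t ≠ 0) (hu : u ≠ 0) (hu1 : u ≠ -1)
    (hw : 0 < 1 - t * u + u) :
    gKL t⁻¹ (t * u) =
      (t * u - u) / ((1 - t * u + u) * (1 + u)) +
        (1 / (1 - t * u + u) ^ 2) * gKL t (u / (1 - t * u + u)) := by
  have hu1' : 1 + u ≠ 0 := fun h => hu1 (by linarith)
  rw [gKL_inv_mul ht, gKL_div t u hw rfl]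
  exact gKLOfSqrt_functional_equation _ ht hu hu1' hw.ne' rfl

/-- The functional equation
`g(t⁻¹, tu) = (tu - u)/((1 - tu + u)(1 + u)) + (1/(1 - tu + u)²) · g(t, u/(1 - tu + u))`,
as an identity of real functions on a suitable region around `u = 0` (where all the
denominators are nonzero and the radicand is nonnegative). -/
theorem stmt_7 (t u : ℝ) (ht : t ≠ 0) (hu : u ≠ 0) (hu1 : u ≠ -1)
    (hw : 0 < 1 - t * u + u)
    (hD : 0 ≤ 1 - 2 * t * u - 4 * t * u ^ 2 + t ^ 2 * u ^ 2)
    (hden : 1 - (2 * t * (u / (1 - t * u + u)) + 1) ^ 2 ≠ 0) :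
    gKL t⁻¹ (t * u) =
      (t * u - u) / ((1 - t * u + u) * (1 + u)) +
        (1 / (1 - t * u + u) ^ 2) * gKL t (u / (1 - t * u + u)) :=
  stmt_7_general t u ht hu hu1 hw
end

section
/- Let f(t,u) = Σ_{n≥3, i≥0} d(n,i) t^i u^{n-1}, where d(n,i) is the number of sets of i pairwise non-crossing diagonals of a convex n-gon. Then (Beckwith) f(t,u) = 2·((2t+1)u + sqrt(1 - 2(2t+1)u + u²) - 1) / (1 - (2t+1)²) as formal power series, equivalently F = f satisfies the quadratic equation (t(t+1))·F² + ((2t+1)u - 1)·F + u² = 0 together with F = u² + O(u³). -/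
/-!
Sets of pairwise non-crossing diagonals are the independent sets of the crossing relation, so
their generating polynomial obeys deletion–contraction, `I(A) = I(A ∖ {c}) + t · I(chords of A
compatible with c)`, and is multiplicative over two chord sets none of which cross. In the
polygon `0, …, N`, delete the diagonals `(0, m)` from vertex `0`, longest first. Choosing `(0, m)`
leaves the diagonals of the polygon `0, …, m` and the chords of the polygon `m, …, N`, where the
side `(m, N)` is now available as well; if no diagonal leaves `0`, the chords of `1, …, N` remain.
A side crosses nothing, so the series of these second polygons is `Q = u + (1 + t) G`, where
`G = Σ_{N ≥ 2} d_N(t) u^N` is the series of dissection polynomials of the polygons `0, …, N`. The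
decomposition reads `G = (u + t G) Q`, which expands to the quadratic equation.
-/

/-- A diagonal of a convex `n`-gon with vertices `0, 1, …, n-1` (in cyclic order),
encoded as an ordered pair `(p.1, p.2)` with `p.1 < p.2`: the two endpoints must be
non-adjacent in the cyclic order. -/
def IsDiagonal (n : ℕ) (p : Fin n × Fin n) : Prop :=
  p.1 < p.2 ∧ (p.2 : ℕ) ≠ (p.1 : ℕ) + 1 ∧ ¬((p.1 : ℕ) = 0 ∧ (p.2 : ℕ) = n - 1)

/-- Two diagonals `{a,b}` and `{c,d}` (with `a < b`, `c < d`) of a convex polygon cross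
(intersect in the interior) iff exactly one of `c, d` lies strictly between `a` and `b`. -/
def Crosses {n : ℕ} (p q : Fin n × Fin n) : Prop :=
  (p.1 < q.1 ∧ q.1 < p.2 ∧ p.2 < q.2) ∨ (q.1 < p.1 ∧ p.1 < q.2 ∧ q.2 < p.2)

/-- `d(n,i)`: the number of sets of `i` pairwise non-crossing diagonals of a convex
`n`-gon. -/
noncomputable def numNonCrossing (n i : ℕ) : ℕ :=
  Nat.card {S : Finset (Fin n × Fin n) //
    S.card = i ∧ (∀ p ∈ S, IsDiagonal n p) ∧ ∀ p ∈ S, ∀ q ∈ S, ¬ Crosses p q}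

open Finset Polynomial

section IndepPoly

variable {α β : Type*} (R : Type*) [CommSemiring R] (r : α → α → Prop)

def IsIndep (S : Finset α) : Prop := ∀ p ∈ S, ∀ q ∈ S, ¬ r p q

open Classical in
noncomputable def indepPoly (A : Finset α) : R[X] :=
  ∑ S ∈ A.powerset with IsIndep r S, X ^ #S

variable {R r}

theorem isIndep_insert [DecidableEq α] {c : α} {T : Finset α} :
    IsIndep r (insert c T) ↔ ¬ r c c ∧ (∀ t ∈ T, ¬ r c t ∧ ¬ r t c) ∧ IsIndep r T := by
  simp only [IsIndep, mem_insert, forall_eq_or_imp]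
  grind

theorem isIndep_union [DecidableEq α] {S T : Finset α}
    (h : ∀ s ∈ S, ∀ t ∈ T, ¬ r s t ∧ ¬ r t s) :
    IsIndep r (S ∪ T) ↔ IsIndep r S ∧ IsIndep r T := by
  simp only [IsIndep, mem_union]
  grind

@[simp]
theorem indepPoly_empty : indepPoly R r ∅ = 1 := by
  rw [indepPoly, powerset_empty, filter_singleton, if_pos (by simp [IsIndep])]
  simp

theorem coeff_indepPoly (A : Finset α) (i : ℕ) :
    (indepPoly R r A).coeff i = Nat.card {S : Finset α // S ⊆ A ∧ IsIndep r S ∧ #S = i} := by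
  classical
  simp only [indepPoly, finsetSum_coeff, coeff_X_pow, sum_boole, filter_filter]
  rw [← Nat.card_eq_finsetCard]
  exact congrArg _ (Nat.card_congr (Equiv.subtypeEquivRight fun S => by simp [eq_comm]))

theorem indepPoly_image [DecidableEq β] {r' : β → β → Prop} {f : α → β}
    (hf : Function.Injective f) (hr : ∀ p q, r' (f p) (f q) ↔ r p q) (A : Finset α) :
    indepPoly R r' (A.image f) = indepPoly R r A := by
  classical
  rw [indepPoly, powerset_image, filter_image,
    sum_image fun S _ T _ h => image_injective hf h, indepPoly]
  refine sum_congr ?_ fun S _ => by rw [card_image_of_injective S hf]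
  congr! 2 with S
  simp [IsIndep, hr]

theorem indepPoly_eq_add [DecidableEq α] [DecidableRel r] {A : Finset α} {c : α}
    (hc : c ∈ A) (hcc : ¬ r c c) :
    indepPoly R r A =
      indepPoly R r (A.erase c) + X * indepPoly R r {a ∈ A | a ≠ c ∧ ¬ r c a ∧ ¬ r a c} := by
  classical
  have hcompat : {a ∈ A | a ≠ c ∧ ¬ r c a ∧ ¬ r a c} ⊆ A.erase c := fun a ha => by
    simp only [mem_filter, mem_erase] at ha ⊢
    exact ⟨ha.2.1, ha.1⟩
  simp only [indepPoly, sum_filter]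
  conv_lhs => rw [← insert_erase hc, sum_powerset_insert (notMem_erase c A)]
  congr 1
  rw [mul_sum, ← sum_subset (powerset_mono.2 hcompat)]
  · refine sum_congr rfl fun T hT => ?_
    have hTc : ∀ t ∈ T, ¬ r c t ∧ ¬ r t c := fun t ht => (mem_filter.1 (mem_powerset.1 hT ht)).2.2
    have hcT : c ∉ T := fun h => (mem_filter.1 (mem_powerset.1 hT h)).2.1 rfl
    rw [isIndep_insert, card_insert_of_notMem hcT, pow_succ']
    simp only [hcc, not_false_eq_true, true_and, and_iff_right hTc, mul_ite, mul_zero]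
  · intro T hT hT'
    rw [isIndep_insert, if_neg]
    rintro ⟨-, hTc, -⟩
    refine hT' (mem_powerset.2 fun t ht => ?_)
    have ht' := mem_erase.1 (mem_powerset.1 hT ht)
    exact mem_filter.2 ⟨ht'.2, ht'.1, hTc t ht⟩

theorem indepPoly_union [DecidableEq α] {A B : Finset α} (hAB : Disjoint A B)
    (h : ∀ a ∈ A, ∀ b ∈ B, ¬ r a b ∧ ¬ r b a) :
    indepPoly R r (A ∪ B) = indepPoly R r A * indepPoly R r B := by
  classical
  simp only [indepPoly, sum_filter, sum_mul_sum, ← sum_product']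
  refine sum_nbij' (fun U => (U ∩ A, U ∩ B)) (fun p => p.1 ∪ p.2) ?_ ?_ ?_ ?_ ?_
  · intro U _
    simp
  · intro p hp
    simp only [mem_product, mem_powerset] at hp ⊢
    exact union_subset_union hp.1 hp.2
  · intro U hU
    simp only [mem_powerset] at hU
    rw [← inter_union_distrib_left, inter_eq_left.2 hU]
  · intro p hp
    simp only [mem_product, mem_powerset] at hp
    have := disjoint_left.1 hAB
    ext x <;> simp only [mem_inter, mem_union] <;> grind
  · intro U hU
    simp only [mem_powerset] at hU
    have hsplit : U = (U ∩ A) ∪ (U ∩ B) := by rw [← inter_union_distrib_left, inter_eq_left.2 hU]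
    have hdisj : Disjoint (U ∩ A) (U ∩ B) := hAB.mono inter_subset_right inter_subset_right
    dsimp only
    conv_lhs => rw [hsplit]
    rw [isIndep_union fun s hs t ht => h s (mem_inter.1 hs).2 t (mem_inter.1 ht).2,
      card_union_of_disjoint hdisj, pow_add, ite_zero_mul_ite_zero]
    congr 1

end IndepPoly

section Chords

variable {α β : Type*}

def ChordCross [LT α] (p q : α × α) : Prop :=
  (p.1 < q.1 ∧ q.1 < p.2 ∧ p.2 < q.2) ∨ (q.1 < p.1 ∧ p.1 < q.2 ∧ q.2 < p.2)

instance [LT α] [DecidableLT α] : DecidableRel (ChordCross : α × α → α × α → Prop) :=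
  fun p q => by unfold ChordCross; infer_instance

theorem chordCross_irrefl [Preorder α] (p : α × α) : ¬ ChordCross p p := by
  simp [ChordCross]

theorem StrictMono.chordCross_iff [LinearOrder α] [Preorder β] {f : α → β} (hf : StrictMono f)
    (p q : α × α) : ChordCross (Prod.map f f p) (Prod.map f f q) ↔ ChordCross p q := by
  simp [ChordCross, hf.lt_iff_lt]

end Chords

section Polygon

variable (R : Type*) [CommSemiring R]

/-- The non-adjacent pairs of the path `a, a + 1, …, b`: in the polygon on these vertices, its
diagonals together with the side `(a, b)`. -/
def chords (a b : ℕ) : Finset (ℕ × ℕ) := {p ∈ Icc a b ×ˢ Icc a b | p.1 + 2 ≤ p.2}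

/-- The diagonals of the polygon on the `N + 1` vertices `0, …, N`. -/
def diagonals (N : ℕ) : Finset (ℕ × ℕ) := (chords 0 N).erase (0, N)

noncomputable def dissectionPoly (N : ℕ) : R[X] := indepPoly R ChordCross (diagonals N)

noncomputable def chordPoly (N : ℕ) : R[X] := indepPoly R ChordCross (chords 0 N)

variable {R}

theorem mem_chords {a b : ℕ} {p : ℕ × ℕ} : p ∈ chords a b ↔ a ≤ p.1 ∧ p.1 + 2 ≤ p.2 ∧ p.2 ≤ b := by
  simp only [chords, mem_filter, mem_product, mem_Icc]
  omega

theorem mem_diagonals {N : ℕ} {p : ℕ × ℕ} :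
    p ∈ diagonals N ↔ p.1 + 2 ≤ p.2 ∧ p.2 ≤ N ∧ ¬ (p.1 = 0 ∧ p.2 = N) := by
  simp only [diagonals, mem_erase, mem_chords, ne_eq, Prod.ext_iff]
  omega

theorem indepPoly_chords (a b : ℕ) :
    indepPoly R ChordCross (chords a b) = chordPoly R (b - a) := by
  have hshift : StrictMono (· + a) := strictMono_id.add_const a
  rw [chordPoly, ← indepPoly_image (hshift.injective.prodMap hshift.injective)
    hshift.chordCross_iff (chords 0 (b - a))]
  congr 1
  ext ⟨x, y⟩
  simp only [mem_image, mem_chords, Prod.exists, Prod.map, Prod.mk.injEq]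
  constructor
  · rintro ⟨hx, hxy, hy⟩
    refine ⟨x - a, y - a, ?_⟩
    omega
  · rintro ⟨x', y', h, rfl, rfl⟩
    omega

theorem dissectionPoly_of_le_two {N : ℕ} (hN : N ≤ 2) : dissectionPoly R N = 1 := by
  have hempty : diagonals N = ∅ := by
    ext p
    simp only [mem_diagonals, notMem_empty, iff_false]
    omega
  rw [dissectionPoly, hempty, indepPoly_empty]

theorem chordPoly_of_le_one {N : ℕ} (hN : N ≤ 1) : chordPoly R N = 1 := by
  have hempty : chords 0 N = ∅ := by
    ext p
    simp only [mem_chords, notMem_empty, iff_false]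
    omega
  rw [chordPoly, hempty, indepPoly_empty]

theorem chordPoly_eq_one_add_X_mul {N : ℕ} (hN : 2 ≤ N) :
    chordPoly R N = (1 + X) * dissectionPoly R N := by
  have hside : {c ∈ chords 0 N | c ≠ (0, N) ∧ ¬ ChordCross (0, N) c ∧ ¬ ChordCross c (0, N)} =
      diagonals N := by
    ext p
    simp only [mem_filter, mem_chords, mem_diagonals, ne_eq, Prod.ext_iff, ChordCross]
    omega
  have hside_mem : (0, N) ∈ chords 0 N := mem_chords.2 ⟨le_rfl, hN, le_rfl⟩
  rw [chordPoly, indepPoly_eq_add hside_mem (chordCross_irrefl _), hside, ← diagonals,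
    ← dissectionPoly]
  ring

end Polygon

section Recurrence

variable {R : Type*} [CommSemiring R]

variable (R) in
noncomputable def dissectionSeries : PowerSeries R[X] :=
  PowerSeries.mk fun N => if 2 ≤ N then dissectionPoly R N else 0

variable (R) in
noncomputable def chordSeries : PowerSeries R[X] :=
  PowerSeries.mk fun N => if 1 ≤ N then chordPoly R N else 0

theorem coeff_dissectionSeries (N : ℕ) :
    PowerSeries.coeff N (dissectionSeries R) = if 2 ≤ N then dissectionPoly R N else 0 :=
  PowerSeries.coeff_mk _ _

theorem coeff_chordSeries (N : ℕ) :
    PowerSeries.coeff N (chordSeries R) = if 1 ≤ N then chordPoly R N else 0 :=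
  PowerSeries.coeff_mk _ _

theorem indepPoly_diagonals_fan_le {N m : ℕ} (hm : 1 ≤ m) (hmN : m < N) :
    indepPoly R ChordCross {c ∈ diagonals N | c.1 = 0 → c.2 ≤ m} =
      chordPoly R (N - 1) + X * ∑ k ∈ range (m + 1),
        PowerSeries.coeff k (dissectionSeries R) * chordPoly R (N - k) := by
  induction m, hm using Nat.le_induction with
  | base =>
    have hno_fan : {c ∈ diagonals N | c.1 = 0 → c.2 ≤ 1} = chords 1 N := by
      ext p
      simp only [mem_filter, mem_diagonals, mem_chords]
      omega
    simp [hno_fan, indepPoly_chords, sum_range_succ, coeff_dissectionSeries]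
  | succ m hm ih =>
    have hc : (0, m + 1) ∈ {c ∈ diagonals N | c.1 = 0 → c.2 ≤ m + 1} := by
      simp only [mem_filter, mem_diagonals]
      omega
    have herase : {c ∈ diagonals N | c.1 = 0 → c.2 ≤ m + 1}.erase (0, m + 1) =
        {c ∈ diagonals N | c.1 = 0 → c.2 ≤ m} := by
      ext p
      simp only [mem_erase, mem_filter, mem_diagonals, ne_eq, Prod.ext_iff]
      omega
    -- the chords compatible with `(0, m + 1)` are those on either side of it
    have hcompatible : {c ∈ {c ∈ diagonals N | c.1 = 0 → c.2 ≤ m + 1} |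
        c ≠ (0, m + 1) ∧ ¬ ChordCross (0, m + 1) c ∧ ¬ ChordCross c (0, m + 1)} =
        diagonals (m + 1) ∪ chords (m + 1) N := by
      ext p
      simp only [mem_filter, mem_union, mem_diagonals, mem_chords, ne_eq, Prod.ext_iff,
        ChordCross]
      omega
    have hdisj : Disjoint (diagonals (m + 1)) (chords (m + 1) N) := by
      rw [disjoint_left]
      intro p hp hp'
      rw [mem_diagonals] at hp
      rw [mem_chords] at hp'
      omega
    have hsep : ∀ a ∈ diagonals (m + 1), ∀ b ∈ chords (m + 1) N,
        ¬ ChordCross a b ∧ ¬ ChordCross b a := by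
      intro a ha b hb
      rw [mem_diagonals] at ha
      rw [mem_chords] at hb
      simp only [ChordCross]
      omega
    rw [indepPoly_eq_add hc (chordCross_irrefl _), herase, ih (by omega), hcompatible,
      indepPoly_union hdisj hsep, indepPoly_chords, sum_range_succ (n := m + 1),
      coeff_dissectionSeries, if_pos (by omega : 2 ≤ m + 1), ← dissectionPoly]
    ring

theorem dissectionPoly_eq_sum {N : ℕ} (hN : 2 ≤ N) :
    dissectionPoly R N = chordPoly R (N - 1) + X * ∑ k ∈ range N,
        PowerSeries.coeff k (dissectionSeries R) * chordPoly R (N - k) := by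
  have hall : {c ∈ diagonals N | c.1 = 0 → c.2 ≤ N - 1} = diagonals N := by
    ext p
    simp only [mem_filter, mem_diagonals, and_iff_left_iff_imp]
    omega
  rw [dissectionPoly, ← hall, indepPoly_diagonals_fan_le (by omega) (by omega),
    Nat.sub_add_cancel (by omega)]

end Recurrence

section Series

variable {R : Type*} [CommSemiring R]

theorem chordSeries_eq :
    chordSeries R = PowerSeries.X + PowerSeries.C (1 + X) * dissectionSeries R := by
  ext N : 1
  rw [map_add, PowerSeries.coeff_C_mul, PowerSeries.coeff_X, coeff_chordSeries,
    coeff_dissectionSeries]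
  rcases lt_trichotomy N 1 with hN | rfl | hN
  · simp [show N = 0 by omega]
  · simp [chordPoly_of_le_one]
  · simp [show 1 ≤ N by omega, show 2 ≤ N by omega, show N ≠ 1 by omega,
      chordPoly_eq_one_add_X_mul]

theorem dissectionSeries_eq :
    dissectionSeries R =
      (PowerSeries.X + PowerSeries.C X * dissectionSeries R) * chordSeries R := by
  ext N : 1
  rw [add_mul, map_add, mul_assoc, PowerSeries.coeff_C_mul,
    PowerSeries.coeff_mul N (dissectionSeries R)]
  rcases N with _ | n
  · simp [coeff_dissectionSeries]
  rw [PowerSeries.coeff_succ_X_mul, Nat.sum_antidiagonal_eq_sum_range_succ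
    (fun i j => PowerSeries.coeff i (dissectionSeries R) * PowerSeries.coeff j (chordSeries R)),
    sum_range_succ, Nat.sub_self, coeff_chordSeries 0, if_neg (by omega), mul_zero, add_zero]
  rcases Nat.eq_zero_or_pos n with rfl | hn
  · simp [coeff_dissectionSeries, coeff_chordSeries]
  rw [coeff_dissectionSeries, if_pos (by omega), dissectionPoly_eq_sum (by omega),
    coeff_chordSeries, if_pos (Nat.one_le_iff_ne_zero.2 hn.ne'), Nat.add_sub_cancel]
  refine congrArg (chordPoly R n + X * ·) (sum_congr rfl fun k hk => ?_)
  rw [coeff_chordSeries, if_pos (by simp at hk; omega)]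

end Series

section Degree

variable {R : Type*} [CommSemiring R]

theorem natDegree_dissectionPoly_le (N : ℕ) : (dissectionPoly R N).natDegree ≤ N - 2 := by
  induction N using Nat.strong_induction_on with
  | _ N ih =>
  rcases le_or_gt N 2 with hN | hN
  · simp [dissectionPoly_of_le_two hN]
  have hchord : ∀ k < N, (chordPoly R k).natDegree ≤ k - 1 := by
    intro k hk
    rcases le_or_gt k 1 with hk1 | hk1
    · simp [chordPoly_of_le_one hk1]
    have h1X : (1 + X : R[X]).natDegree ≤ 1 :=
      (natDegree_add_le _ _).trans (max_le (by simp) natDegree_X_le)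
    rw [chordPoly_eq_one_add_X_mul hk1]
    exact natDegree_mul_le.trans (by have := ih k hk; omega)
  rw [dissectionPoly_eq_sum hN.le]
  refine natDegree_add_le_of_degree_le ((hchord _ (by omega)).trans (by omega)) ?_
  have hsum : (∑ k ∈ range N, PowerSeries.coeff k (dissectionSeries R) *
      chordPoly R (N - k)).natDegree ≤ N - 3 := by
    refine natDegree_sum_le_of_forall_le _ _ fun k hk => ?_
    rw [mem_range] at hk
    rw [coeff_dissectionSeries]
    split_ifs with hk2
    · exact natDegree_mul_le.trans (by have := ih k hk; have := hchord (N - k) (by omega); omega)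
    · simp
  exact natDegree_mul_le.trans (by have := natDegree_X_le (R := R); omega)

end Degree

section Counting

variable {R : Type*} [CommSemiring R]

instance (n : ℕ) : DecidablePred (IsDiagonal n) := fun p => by
  unfold IsDiagonal; infer_instance

theorem image_val_filter_isDiagonal (N : ℕ) :
    (univ.filter (IsDiagonal (N + 1))).image (Prod.map Fin.val Fin.val) =
      diagonals N := by
  ext ⟨x, y⟩
  simp only [mem_image, mem_filter, mem_univ, true_and, mem_diagonals, Prod.exists, Prod.map,
    Prod.mk.injEq, IsDiagonal, Fin.lt_def]
  constructor
  · rintro ⟨a, b, h, rfl, rfl⟩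
    have := b.isLt
    omega
  · rintro ⟨hxy, hy, hside⟩
    exact ⟨⟨x, by omega⟩, ⟨y, by omega⟩, by simp only; omega, rfl, rfl⟩

theorem numNonCrossing_eq_coeff (N i : ℕ) :
    (numNonCrossing (N + 1) i : R) = (dissectionPoly R N).coeff i := by
  have hinj : Function.Injective (Prod.map Fin.val Fin.val : Fin (N + 1) × Fin (N + 1) → ℕ × ℕ) :=
    Fin.val_injective.prodMap Fin.val_injective
  rw [dissectionPoly, ← image_val_filter_isDiagonal,
    indepPoly_image hinj (Fin.val_strictMono.chordCross_iff), coeff_indepPoly, numNonCrossing]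
  congr 1
  refine Nat.card_congr (Equiv.subtypeEquivRight fun S => ?_)
  simp only [subset_iff, mem_filter, mem_univ, true_and, IsIndep]
  tauto

theorem sum_numNonCrossing_eq (N : ℕ) :
    ∑ i ∈ range (N + 2), C (numNonCrossing (N + 1) i : R) * X ^ i = dissectionPoly R N := by
  have hdeg : (dissectionPoly R N).natDegree < N + 2 :=
    (natDegree_dissectionPoly_le N).trans_lt (by omega)
  conv_rhs => rw [as_sum_range' _ _ hdeg]
  simp only [← C_mul_X_pow_eq_monomial, numNonCrossing_eq_coeff]

end Counting

open PowerSeries in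
/-- Beckwith's generating function identity: the generating function
`f(t,u) = Σ_{n≥3, i≥0} d(n,i) t^i u^{n-1}` — viewed as a formal power series `F` in `u`
whose coefficients are polynomials in `t` — satisfies the quadratic equation
`t(t+1)·F² + ((2t+1)u - 1)·F + u² = 0`, together with `F = u² + O(u³)` (which pins down
the branch `f(t,u) = 2·((2t+1)u + sqrt(1 - 2(2t+1)u + u²) - 1) / (1 - (2t+1)²)`). -/
theorem stmt_8 :
    ∀ F : PowerSeries (Polynomial ℚ),
      F = PowerSeries.mk (fun m => if 2 ≤ m then
            ∑ i ∈ Finset.range (m + 2), Polynomial.C ((numNonCrossing (m + 1) i : ℚ)) * Polynomial.X ^ i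
          else 0) →
      (PowerSeries.C (Polynomial.X * (Polynomial.X + 1))) * F ^ 2
          + ((PowerSeries.C (2 * Polynomial.X + 1)) * PowerSeries.X - 1) * F
          + PowerSeries.X ^ 2 = 0
        ∧ PowerSeries.coeff 0 F = 0 ∧ PowerSeries.coeff 1 F = 0
        ∧ PowerSeries.coeff 2 F = 1 := by
  intro F hF
  simp only [sum_numNonCrossing_eq] at hF
  obtain rfl : F = dissectionSeries ℚ := hF
  refine ⟨?_, by simp [coeff_dissectionSeries], by simp [coeff_dissectionSeries],
    by simp [coeff_dissectionSeries, dissectionPoly_of_le_two]⟩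
  have h := dissectionSeries_eq (R := ℚ)
  rw [chordSeries_eq] at h
  simp only [map_mul, map_add, map_one, map_ofNat] at h ⊢
  linear_combination -h
end

section
/- The Littlewood-Richardson coefficient c^ν_{μλ} with ν = [n-2i, 2^i], λ = [p+2q-2i+1, 2^{i-q}], μ = [n+q-2i-1, 1^{2i-p-q}] equals 1 if i > 0, p = 2i-1 and q = 1, and equals 0 otherwise, for all integers n ≥ 2, 0 ≤ i < (n-1)/2, 0 < p < n, 0 ≤ q ≤ min(i, 2i-p). -/
/-!
In the exceptional case `i > 0`, `p = 2i - 1`, `q = 1` we have `λ = (2^i)` and `μ = (n - 2i)` is a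
single row, while `ν/λ` is a horizontal strip with `n - 2i` cells (the end of the first row and
the last row), so the all-ones filling is the only Littlewood–Richardson tableau. Otherwise
either `q ≥ 2`, and then `μ₁ = n + q - 2i - 1` exceeds the number `n - 2i` of columns of `ν`,
although the `1`s of a column-strict filling lie in distinct columns; or `q ≤ 1`, and then `λ`
starts with a part smaller than `2` followed by a `2`, so it is not a partition.
-/

/-- A list of natural numbers is a partition if it is weakly decreasing with all parts
positive. -/
def IsPartitionList (l : List ℕ) : Prop := l.Pairwise (· ≥ ·) ∧ ∀ x ∈ l, 0 < x

/-- The cells of the skew shape `ν/λ`: pairs `(r, j)` with `λ_r ≤ j < ν_r`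
(rows and columns indexed from `0`). -/
def skewCells (ν lam : List ℕ) : Finset (ℕ × ℕ) :=
  (Finset.range ν.length ×ˢ Finset.range (ν.foldr max 0)).filter
    (fun c => lam.getD c.1 0 ≤ c.2 ∧ c.2 < ν.getD c.1 0)

/-- `T` is a Littlewood–Richardson skew tableau of shape `ν/λ` and weight `μ`:
entries are positive on the cells of `ν/λ` (and `0` elsewhere), rows weakly increase,
columns strictly increase, the number of entries equal to `k+1` is `μ_k`, and the reverse
reading word (right to left along each row, rows from top to bottom) is a lattice word:
in every prefix, the number of `k+2`'s never exceeds the number of `k+1`'s. -/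
def IsLRTableau (ν lam mu : List ℕ) (T : ℕ × ℕ → ℕ) : Prop :=
  (∀ c, c ∉ skewCells ν lam → T c = 0) ∧
  (∀ c ∈ skewCells ν lam, 1 ≤ T c) ∧
  (∀ r j j', (r, j) ∈ skewCells ν lam → (r, j') ∈ skewCells ν lam → j ≤ j' →
    T (r, j) ≤ T (r, j')) ∧
  (∀ r r' j, (r, j) ∈ skewCells ν lam → (r', j) ∈ skewCells ν lam → r < r' →
    T (r, j) < T (r', j)) ∧
  (∀ k, ((skewCells ν lam).filter (fun c => T c = k + 1)).card = mu.getD k 0) ∧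
  (∀ r j k,
    ((skewCells ν lam).filter
      (fun c => (c.1 < r ∨ (c.1 = r ∧ j ≤ c.2)) ∧ T c = k + 2)).card ≤
    ((skewCells ν lam).filter
      (fun c => (c.1 < r ∨ (c.1 = r ∧ j ≤ c.2)) ∧ T c = k + 1)).card)

/-- The Littlewood–Richardson coefficient `c^ν_{μλ}`: the number of Littlewood–Richardson
skew tableaux of shape `ν/λ` and weight `μ` (equivalently, the multiplicity of `V_ν` in
`Ind_{S_{|μ|}×S_{|λ|}}^{S_{|ν|}}(V_μ ⊠ V_λ)`).  By convention it is `0` if one of the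
indexing lists is not a partition. -/
noncomputable def LRCoeff (ν mu lam : List ℕ) : ℕ := by
  classical
  exact if IsPartitionList ν ∧ IsPartitionList mu ∧ IsPartitionList lam then
    Nat.card {T : ℕ × ℕ → ℕ // IsLRTableau ν lam mu T}
  else 0

open Finset

lemma isPartitionList_cons_replicate {x y k : ℕ} :
    IsPartitionList (x :: List.replicate k y) ↔ 0 < x ∧ (k ≠ 0 → 0 < y ∧ y ≤ x) := by
  simp only [IsPartitionList, List.pairwise_cons, List.pairwise_replicate, List.mem_cons,
    List.mem_replicate, forall_eq_or_imp]
  grind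

lemma foldr_max_cons_replicate {x y : ℕ} (k : ℕ) (h : y ≤ x) :
    (x :: List.replicate k y).foldr max 0 = x := by
  induction k with
  | zero => simp
  | succ k ih => simp_all [List.replicate_succ]

lemma getD_replicate_eq_ite {α : Type*} (x d : α) (k r : ℕ) :
    (List.replicate k x).getD r d = if r < k then x else d := by
  grind

def IsHorizontalStrip (S : Finset (ℕ × ℕ)) : Prop := Set.InjOn Prod.snd (S : Set (ℕ × ℕ))

section LRCoeff

variable {ν mu lam : List ℕ}

lemma LRCoeff_eq_zero_of_not_isPartitionList_lam (h : ¬IsPartitionList lam) :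
    LRCoeff ν mu lam = 0 := by
  simp [LRCoeff, h]

lemma card_filter_eq_le_card_image_snd {S : Finset (ℕ × ℕ)} {T : ℕ × ℕ → ℕ}
    (hcol : ∀ r r' j, (r, j) ∈ S → (r', j) ∈ S → r < r' → T (r, j) < T (r', j)) (v : ℕ) :
    (S.filter (T · = v)).card ≤ (S.image Prod.snd).card := by
  refine card_le_card_of_injOn Prod.snd (fun c hc => mem_image_of_mem _ (mem_filter.1 hc).1) ?_
  rintro ⟨r, j⟩ hc ⟨r', j'⟩ hc' (rfl : j = j')
  simp only [coe_filter, Set.mem_ofPred_eq] at hc hc'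
  rcases lt_trichotomy r r' with h | rfl | h
  · exact absurd (hcol r r' j hc.1 hc'.1 h) (by omega)
  · rfl
  · exact absurd (hcol r' r j hc'.1 hc.1 h) (by omega)

lemma IsLRTableau.getD_le_foldr_max {T : ℕ × ℕ → ℕ} (hT : IsLRTableau ν lam mu T) (k : ℕ) :
    mu.getD k 0 ≤ ν.foldr max 0 := by
  obtain ⟨-, -, -, hcol, hweight, -⟩ := hT
  rw [← hweight k]
  calc _ ≤ ((skewCells ν lam).image Prod.snd).card := card_filter_eq_le_card_image_snd hcol _
    _ ≤ (range (ν.foldr max 0)).card :=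
        card_le_card (image_subset_iff.2 fun c hc => (mem_product.1 (mem_filter.1 hc).1).2)
    _ = _ := card_range _

lemma LRCoeff_eq_zero_of_foldr_max_lt {k : ℕ} (h : ν.foldr max 0 < mu.getD k 0) :
    LRCoeff ν mu lam = 0 := by
  have : IsEmpty {T // IsLRTableau ν lam mu T} :=
    ⟨fun T => (T.2.getD_le_foldr_max k).not_gt h⟩
  simp [LRCoeff]

lemma IsLRTableau.eq_indicator_of_singleton {m : ℕ} {T : ℕ × ℕ → ℕ}
    (hT : IsLRTableau ν lam [m] T) : T = (skewCells ν lam : Set (ℕ × ℕ)).indicator 1 := by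
  obtain ⟨houtside, hpos, -, -, hweight, -⟩ := hT
  funext c
  by_cases hc : c ∈ skewCells ν lam
  · rw [Set.indicator_of_mem (mem_coe.2 hc), Pi.one_apply]
    refine le_antisymm ?_ (hpos c hc)
    by_contra! hgt
    have hempty := hweight (T c - 2 + 1)
    rw [List.getD_cons_succ, List.getD_nil, card_eq_zero, filter_eq_empty_iff] at hempty
    exact hempty hc (by omega)
  · rw [Set.indicator_of_notMem (by simpa using hc), houtside c hc]

lemma isLRTableau_indicator_of_isHorizontalStrip (hstrip : IsHorizontalStrip (skewCells ν lam)) :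
    IsLRTableau ν lam [(skewCells ν lam).card]
      ((skewCells ν lam : Set (ℕ × ℕ)).indicator 1) := by
  have hone : ∀ c ∈ skewCells ν lam, (skewCells ν lam : Set (ℕ × ℕ)).indicator 1 c = 1 :=
    fun c hc => Set.indicator_of_mem (mem_coe.2 hc) 1
  refine ⟨fun c hc => Set.indicator_of_notMem (by simpa using hc) 1,
    fun c hc => (hone c hc).ge, fun r j j' hc hc' _ => (hone _ hc).trans_le (hone _ hc').ge,
    fun r r' j hc hc' hlt => absurd (Prod.ext_iff.1 (hstrip hc hc' rfl)).1 hlt.ne,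
    fun k => ?_, fun r j k => ?_⟩
  · rcases k with _ | k
    · rw [filter_true_of_mem fun c hc => hone c hc]
      rfl
    · rw [filter_false_of_mem fun c hc => by rw [hone c hc]; omega]
      rfl
  · rw [filter_false_of_mem fun c hc => by rw [hone c hc]; omega]
    exact Nat.zero_le _

lemma LRCoeff_eq_one_of_isHorizontalStrip (hν : IsPartitionList ν) (hlam : IsPartitionList lam)
    (hstrip : IsHorizontalStrip (skewCells ν lam)) {m : ℕ} (hm : 0 < m)
    (hcard : (skewCells ν lam).card = m) : LRCoeff ν [m] lam = 1 := by
  subst hcard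
  have hmu : IsPartitionList [(skewCells ν lam).card] := by simp [IsPartitionList, hm]
  have : Unique {T // IsLRTableau ν lam [(skewCells ν lam).card] T} :=
    { default := ⟨_, isLRTableau_indicator_of_isHorizontalStrip hstrip⟩
      uniq := fun T => Subtype.ext T.2.eq_indicator_of_singleton }
  simp [LRCoeff, hν, hmu, hlam]

end LRCoeff

section TwoColumns

variable {N i : ℕ}

lemma skewCells_cons_replicate_two (hN : 2 ≤ N) (hi : 0 < i) :
    skewCells (N :: List.replicate i 2) (2 :: List.replicate (i - 1) 2) =
      {0} ×ˢ Ico 2 N ∪ {i} ×ˢ range 2 := by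
  ext ⟨_ | r, j⟩ <;>
    simp only [skewCells, mem_filter, mem_product, mem_range, mem_union, mem_singleton, mem_Ico,
      List.length_cons, List.length_replicate, foldr_max_cons_replicate _ hN, List.getD_cons_zero,
      List.getD_cons_succ, getD_replicate_eq_ite, true_and]
  · omega
  · split_ifs <;> simp only [false_and, false_or] <;> omega

lemma isHorizontalStrip_skewCells_cons_replicate_two (hN : 2 ≤ N) (hi : 0 < i) :
    IsHorizontalStrip (skewCells (N :: List.replicate i 2) (2 :: List.replicate (i - 1) 2)) := by
  rw [IsHorizontalStrip, skewCells_cons_replicate_two hN hi]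
  rintro ⟨r, j⟩ hc ⟨r', j'⟩ hc' (rfl : j = j')
  simp only [coe_union, coe_product, coe_singleton, coe_Ico, coe_range, Set.mem_union,
    Set.mem_prod, Set.mem_singleton_iff, Set.mem_Ico, Set.mem_Iio] at hc hc'
  exact Prod.ext (by omega) rfl

lemma card_skewCells_cons_replicate_two (hN : 2 ≤ N) (hi : 0 < i) :
    (skewCells (N :: List.replicate i 2) (2 :: List.replicate (i - 1) 2)).card = N := by
  have hdisj : Disjoint ({0} ×ˢ Ico 2 N) ({i} ×ˢ range 2) :=
    disjoint_left.2 fun c hc hc' => by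
      rw [mem_product, mem_singleton] at hc hc'
      omega
  rw [skewCells_cons_replicate_two hN hi, card_union_of_disjoint hdisj, card_product, card_product,
    card_singleton, card_singleton, Nat.card_Ico, card_range]
  omega

end TwoColumns

theorem stmt_13_general (n i p q : ℕ) (hi : 2 * i + 1 < n)
    (hp0 : 0 < p) (hqp : p + q ≤ 2 * i) :
    LRCoeff ((n - 2 * i) :: List.replicate i 2)
        ((n + q - 2 * i - 1) :: List.replicate (2 * i - p - q) 1)
        ((p + 2 * q + 1 - 2 * i) :: List.replicate (i - q) 2) =
      (if 0 < i ∧ p = 2 * i - 1 ∧ q = 1 then 1 else 0) := by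
  split_ifs with h
  · obtain ⟨hi0, rfl, rfl⟩ := h
    have hN : 2 ≤ n - 2 * i := by omega
    rw [show n + 1 - 2 * i - 1 = n - 2 * i by omega, show 2 * i - (2 * i - 1) - 1 = 0 by omega,
      show 2 * i - 1 + 2 * 1 + 1 - 2 * i = 2 by omega, List.replicate_zero]
    exact LRCoeff_eq_one_of_isHorizontalStrip
      (isPartitionList_cons_replicate.2 ⟨by omega, fun _ => ⟨two_pos, hN⟩⟩)
      (isPartitionList_cons_replicate.2 ⟨two_pos, fun _ => ⟨two_pos, le_rfl⟩⟩)
      (isHorizontalStrip_skewCells_cons_replicate_two hN hi0) (by omega)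
      (card_skewCells_cons_replicate_two hN hi0)
  · by_cases hq : 2 ≤ q
    · refine LRCoeff_eq_zero_of_foldr_max_lt (k := 0) ?_
      rw [foldr_max_cons_replicate _ (by omega), List.getD_cons_zero]
      omega
    · refine LRCoeff_eq_zero_of_not_isPartitionList_lam fun hlam => ?_
      rw [isPartitionList_cons_replicate] at hlam
      omega

/-- For integers `n ≥ 2`, `0 ≤ i < (n-1)/2`, `0 < p < n`, `0 ≤ q ≤ min(i, 2i-p)`, the
Littlewood–Richardson coefficient `c^ν_{μλ}` with `ν = [n-2i, 2^i]`,
`λ = [p+2q-2i+1, 2^{i-q}]`, `μ = [n+q-2i-1, 1^{2i-p-q}]` equals `1` if `i > 0`, `p = 2i-1`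
and `q = 1`, and equals `0` otherwise.  (A "partition" with a part out of order or
nonpositive indexes the coefficient `0`, which is built into `LRCoeff`.) -/
theorem stmt_13 (n i p q : ℕ) (hn : 2 ≤ n) (hi : 2 * i + 1 < n)
    (hp0 : 0 < p) (hpn : p < n) (hqi : q ≤ i) (hqp : p + q ≤ 2 * i) :
    LRCoeff ((n - 2 * i) :: List.replicate i 2)
        ((n + q - 2 * i - 1) :: List.replicate (2 * i - p - q) 1)
        ((p + 2 * q + 1 - 2 * i) :: List.replicate (i - q) 2) =
      (if 0 < i ∧ p = 2 * i - 1 ∧ q = 1 then 1 else 0) :=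
  stmt_13_general n i p q hi hp0 hqp
end

section
/- The Littlewood-Richardson coefficient c^ν_{μ'λ} with ν = [n-2i, 2^i], λ = [p+2q-2i+1, 2^{i-q}], μ' = [n+q-2i, 1^{2i-p-q-1}] is zero for all integers n ≥ 2, 0 ≤ i < (n-1)/2, 0 < p < n, 0 ≤ q ≤ min(i, 2i-p). -/
/-!
Column strictness puts the entries equal to `1` of a Littlewood–Richardson tableau in distinct
columns, so the first part of `μ'` is at most the number of columns of `ν/λ`. Here `ν/λ` meets
only the columns `[a, n - 2i)` of the first row, `a = p + 2q + 1 - 2i`, and the columns `0, 1`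
below it, whereas `μ'₁ = n + q - 2i` is larger as soon as `a + q ≥ 3`. As `p + q ≤ 2i` gives
`a ≤ q + 1`, it suffices that `a ≥ 2`: for `q < i` because `λ` is a partition, and otherwise
because `a ≥ p + 1`.
-/

open Finset

lemma IsPartitionList.le_head {x y : ℕ} {l : List ℕ} (h : IsPartitionList (x :: l))
    (hy : y ∈ l) : y ≤ x :=
  (List.pairwise_cons.1 h.1).1 y hy

lemma LRCoeff_eq_zero_of_not_isPartitionList_right {ν mu lam : List ℕ}
    (h : ¬ IsPartitionList lam) : LRCoeff ν mu lam = 0 := by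
  unfold LRCoeff
  rw [if_neg (by tauto)]

lemma image_snd_skewCells_cons_subset (m a b : ℕ) (ν lam : List ℕ) (hν : ∀ x ∈ ν, x ≤ b) :
    (skewCells (m :: ν) (a :: lam)).image Prod.snd ⊆ Ico a m ∪ range b := by
  simp only [subset_iff, mem_image, skewCells, mem_filter, mem_product, mem_range]
  rintro j ⟨⟨_ | r, j⟩, ⟨⟨hr, -⟩, hlo, hhi⟩, rfl⟩
  · simp_all
  · simp only [List.getD_cons_succ, List.length_cons] at hhi hr
    rw [List.getD_eq_getElem _ _ (by omega)] at hhi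
    exact mem_union_right _ (mem_range.2 (hhi.trans_le (hν _ (List.getElem_mem _))))

lemma card_image_snd_skewCells_cons_le (m a b : ℕ) (ν lam : List ℕ) (hν : ∀ x ∈ ν, x ≤ b) :
    ((skewCells (m :: ν) (a :: lam)).image Prod.snd).card ≤ m - a + b :=
  (card_le_card (image_snd_skewCells_cons_subset m a b ν lam hν)).trans
    ((card_union_le _ _).trans (by simp))

section LRTableau

variable {ν lam mu : List ℕ} {T : ℕ × ℕ → ℕ}

lemma IsLRTableau.injOn_snd_filter (hT : IsLRTableau ν lam mu T) (v : ℕ) :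
    Set.InjOn Prod.snd ((skewCells ν lam).filter (T · = v) : Set (ℕ × ℕ)) := by
  rintro ⟨r, j⟩ hc ⟨r', j'⟩ hc' (rfl : j = j')
  simp only [coe_filter, Set.mem_ofPred_eq] at hc hc'
  have hcol := hT.2.2.2.1
  rcases lt_trichotomy r r' with h | rfl | h
  · exact absurd (hcol r r' j hc.1 hc'.1 h) (by omega)
  · rfl
  · exact absurd (hcol r' r j hc'.1 hc.1 h) (by omega)

lemma IsLRTableau.getD_le_card_columns (hT : IsLRTableau ν lam mu T) (k : ℕ) :
    mu.getD k 0 ≤ ((skewCells ν lam).image Prod.snd).card := by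
  rw [← hT.2.2.2.2.1 k]
  exact card_le_card_of_injOn Prod.snd
    (fun c hc => mem_image_of_mem _ (mem_filter.1 hc).1) (hT.injOn_snd_filter _)

lemma LRCoeff_eq_zero_of_card_columns_lt (k : ℕ)
    (h : ((skewCells ν lam).image Prod.snd).card < mu.getD k 0) : LRCoeff ν mu lam = 0 := by
  unfold LRCoeff
  split_ifs
  · rw [Nat.card_eq_zero]
    left
    exact ⟨fun ⟨_, hT⟩ => (hT.getD_le_card_columns k).not_gt h⟩
  · rfl

end LRTableau

theorem stmt_14_general (n i p q : ℕ) (hi : 2 * i + 1 < n)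
    (hp0 : 0 < p) (hqp : p + q ≤ 2 * i) :
    LRCoeff ((n - 2 * i) :: List.replicate i 2)
        ((n + q - 2 * i) :: List.replicate (2 * i - p - q - 1) 1)
        ((p + 2 * q + 1 - 2 * i) :: List.replicate (i - q) 2) = 0 := by
  by_cases hlam : IsPartitionList ((p + 2 * q + 1 - 2 * i) :: List.replicate (i - q) 2)
  · have ha : q < i → 2 ≤ p + 2 * q + 1 - 2 * i := fun h =>
      hlam.le_head (List.mem_replicate.2 ⟨by omega, rfl⟩)
    apply LRCoeff_eq_zero_of_card_columns_lt 0
    refine (card_image_snd_skewCells_cons_le _ _ 2 _ _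
      fun x hx => (List.eq_of_mem_replicate hx).le).trans_lt ?_
    rw [List.getD_cons_zero]
    omega
  · exact LRCoeff_eq_zero_of_not_isPartitionList_right hlam

/-- For integers `n ≥ 2`, `0 ≤ i < (n-1)/2`, `0 < p < n`, `0 ≤ q ≤ min(i, 2i-p)`, the
Littlewood–Richardson coefficient `c^ν_{μ'λ}` with `ν = [n-2i, 2^i]`,
`λ = [p+2q-2i+1, 2^{i-q}]`, `μ' = [n+q-2i, 1^{2i-p-q-1}]` is zero.  (A "partition" with a
part out of order or nonpositive indexes the coefficient `0`, which is built into
`LRCoeff`.) -/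
theorem stmt_14 (n i p q : ℕ) (hn : 2 ≤ n) (hi : 2 * i + 1 < n)
    (hp0 : 0 < p) (hpn : p < n) (hqi : q ≤ i) (hqp : p + q ≤ 2 * i) :
    LRCoeff ((n - 2 * i) :: List.replicate i 2)
        ((n + q - 2 * i) :: List.replicate (2 * i - p - q - 1) 1)
        ((p + 2 * q + 1 - 2 * i) :: List.replicate (i - q) 2) = 0 :=
  stmt_14_general n i p q hi hp0 hqp
end

section
/- Define C(n,i) the binomial coefficient and set P_n(t) = Σ_i (1/(i+1))·C(n-i-2,i)·C(n,i)·t^i. Then for all n ≥ 2, the palindromic defect identity holds: t^{n-1}·P_n(1/t) = Σ_{j=0}^{n-1} (-1)^j·C(n,j)·(t^{n-j-1} - 1) + Σ_{k=2}^{n} C(n,k)·(t-1)^{n-k}·P_k(t), as an identity of Laurent polynomials in t. -/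
open LaurentPolynomial

/-- The Kazhdan-Lusztig polynomial `P_n(x) = Σ_i c(n,i)·x^i` of the uniform matroid of
rank `n-1` on `n` elements, evaluated at an element `x` of a `ℚ`-algebra (the sum may be
taken over `i < n` since `c(n,i) = 0` for `i ≥ (n-1)/2`). -/
noncomputable def PKL (n : ℕ) (x : LaurentPolynomial ℚ) : LaurentPolynomial ℚ :=
  ∑ i ∈ Finset.range n, cKL n i • x ^ i

/-!
Put `y = t - 1`. Since `C(n,k) C(k,i) = C(n,i) C(n-i,k-i)`, the terms `t^i` coming from the
`P_k(t)` in `Σ_k C(n,k) y^(n-k) P_k(t)` add up to `t^i C(n,i)/(i+1)` times the binomial transform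
`Σ_r C(M,r) C(r-2,i) y^(M-r)` with `M = n - i`. Replacing the truncated `C(r-2,i)` by the
generalized binomial coefficient `Ring.choose (r - 2) i = Σ_a C(r,a) C(-2,i-a)` only changes the
boundary terms `r = 0, 1`, and then `Σ_r C(M,r) C(r,a) y^(M-r) = C(M,a) t^(M-a)` evaluates the
transform. The boundary terms are binomial expansions that cancel the first sum of the identity,
and the remaining coefficient of `t^(n-1-j)` is an alternating tail sum of binomial coefficients,
which telescopes to `c(n,j)`. The identity of Laurent polynomials is checked in their fraction
field.
-/

open Finset

theorem Nat.choose_mul_choose_sub_comm (n i j : ℕ) :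
    n.choose i * (n - i).choose j = n.choose j * (n - j).choose i := by
  by_cases h : i + j ≤ n
  · have hi := Nat.choose_mul (n := n) (Nat.le_add_right i j)
    have hj := Nat.choose_mul (n := n) (Nat.le_add_left j i)
    rw [Nat.add_sub_cancel_left] at hi
    rw [Nat.add_sub_cancel, ← Nat.choose_symm_add] at hj
    rw [← hi, ← hj]
  · have vanish : ∀ p q, ¬p + q ≤ n → n.choose p * (n - p).choose q = 0 := fun p q hpq => by
      rcases le_or_gt p n with hp | hp
      · rw [Nat.choose_eq_zero_of_lt (by omega : n - p < q), mul_zero]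
      · rw [Nat.choose_eq_zero_of_lt hp, zero_mul]
    rw [vanish i j h, vanish j i (by omega)]

theorem Ring.choose_neg_two (b : ℕ) : Ring.choose (-2 : ℤ) b = (-1) ^ b * (b + 1) := by
  have h := Ring.choose_neg (2 : ℤ) b
  rw [show (2 : ℤ) + b - 1 = ((b + 1 : ℕ) : ℤ) by push_cast; ring, Ring.choose_natCast,
    Nat.choose_succ_self_right, Units.smul_def, Int.coe_negOnePow_natCast] at h
  rw [h]; push_cast; ring

theorem Ring.choose_natCast_sub_two (r i : ℕ) :
    Ring.choose ((r : ℤ) - 2) i =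
      ∑ a ∈ range (i + 1), (r.choose a : ℤ) * ((-1) ^ (i - a) * ((i - a : ℕ) + 1)) := by
  rw [sub_eq_add_neg, Ring.add_choose_eq _ (Commute.all _ _),
    Nat.sum_antidiagonal_eq_sum_range_succ
      (fun a b => Ring.choose (r : ℤ) a * Ring.choose (-2) b)]
  simp only [Ring.choose_natCast, Ring.choose_neg_two]

section CommRing

variable {R : Type*} [CommRing R]

theorem sum_range_neg_one_pow_mul_choose {n : ℕ} (hn : n ≠ 0) :
    ∑ j ∈ range n, (-1 : R) ^ j * n.choose j = -(-1) ^ n := by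
  have h := add_pow (-1 : R) 1 n
  rw [neg_add_cancel, zero_pow hn, sum_range_succ, Nat.choose_self] at h
  simp only [one_pow, mul_one, Nat.cast_one] at h
  linear_combination -h

theorem sum_range_neg_one_pow_mul_choose_succ (m l N : ℕ) :
    ∑ b ∈ range N, (-1 : R) ^ b * ((m + 1).choose (l + 1 + b) : R) =
      m.choose l - (-1) ^ N * m.choose (l + N) := by
  have h := sum_range_sub' (fun b => (-1 : R) ^ b * (m.choose (l + b) : R)) N
  simp only [add_zero, pow_zero, one_mul] at h
  rw [← h]
  refine sum_congr rfl fun b _ => ?_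
  rw [add_right_comm, Nat.choose_succ_succ', ← add_assoc, pow_succ]
  push_cast
  ring

theorem sum_range_choose_succ_mul_pow_mul_pow (a b : R) (n : ℕ) :
    ∑ i ∈ range n, (n.choose (i + 1) : R) * a ^ i * b ^ (n - 1 - i) =
      ∑ i ∈ range n, (a + b) ^ i * b ^ (n - 1 - i) := by
  induction n with
  | zero => simp
  | succ n ih =>
    rw [Nat.add_sub_cancel, geom_sum₂_succ_eq, ← ih, add_pow, mul_sum]
    simp only [Nat.choose_succ_succ', Nat.cast_add, add_mul, sum_add_distrib]
    rw [sum_range_succ (fun i => (n.choose (i + 1) : R) * a ^ i * b ^ (n - i)),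
      Nat.choose_succ_self, Nat.cast_zero, zero_mul, zero_mul, add_zero]
    congr 1
    · exact sum_congr rfl fun i _ => by ring
    · refine sum_congr rfl fun i hi => ?_
      rw [show n - i = n - 1 - i + 1 by have := mem_range.1 hi; omega, pow_succ]
      ring

theorem sum_range_choose_mul_neg_pow_mul_sub_one_pow (x : R) (n : ℕ) :
    ∑ i ∈ range n, (n.choose i : R) * (-x) ^ i * (x - 1) ^ (n - i) = (-1) ^ n - (-x) ^ n := by
  have h := add_pow (-x) (x - 1) n
  rw [show -x + (x - 1) = -1 by ring, sum_range_succ, Nat.choose_self, Nat.sub_self] at h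
  rw [h]
  simp only [Nat.cast_one, pow_zero, mul_one, add_sub_cancel_right]
  exact sum_congr rfl fun i _ => by ring

theorem sum_range_choose_succ_mul_neg_pow_mul_sub_one_pow (x : R) (n : ℕ) :
    ∑ i ∈ range n, (n.choose (i + 1) : R) * (-x) ^ i * (x - 1) ^ (n - 1 - i) =
      ∑ j ∈ range n, (-1) ^ j * n.choose j * x ^ (n - j - 1) := by
  rw [sum_range_choose_succ_mul_pow_mul_pow, show -x + (x - 1) = -1 by ring, geom_sum₂_comm,
    sub_eq_add_neg x 1, ← sum_range_choose_succ_mul_pow_mul_pow, ← sum_range_reflect]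
  refine sum_congr rfl fun j hj => ?_
  have hj := mem_range.1 hj
  rw [show n - 1 - j + 1 = n - j by omega, Nat.choose_symm (by omega),
    show n - 1 - (n - 1 - j) = j by omega, show n - j - 1 = n - 1 - j by omega]
  ring

theorem sum_range_choose_mul_choose_mul_pow (M a : ℕ) (y : R) :
    ∑ s ∈ range (M + 1), (M.choose s * s.choose a : R) * y ^ (M - s) =
      M.choose a * (1 + y) ^ (M - a) := by
  rcases lt_or_ge M a with hMa | haM
  · rw [Nat.choose_eq_zero_of_lt hMa, Nat.cast_zero, zero_mul]
    refine sum_eq_zero fun s hs => ?_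
    rw [Nat.choose_eq_zero_of_lt ((mem_range.1 hs).trans_le hMa)]
    simp
  obtain ⟨N, rfl⟩ := Nat.exists_eq_add_of_le haM
  rw [add_assoc, sum_range_add, add_pow, mul_sum, Nat.add_sub_cancel_left]
  rw [sum_eq_zero fun s hs => by rw [Nat.choose_eq_zero_of_lt (mem_range.1 hs)]; simp, zero_add]
  refine sum_congr rfl fun u hu => ?_
  have hc := Nat.choose_mul (n := a + N) (Nat.le_add_right a u)
  rw [Nat.add_sub_cancel_left, Nat.add_sub_cancel_left] at hc
  rw [← Nat.cast_mul, hc, Nat.add_sub_add_left, one_pow, one_mul]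
  push_cast
  ring

theorem sum_range_choose_mul_choose_sub_two_mul_pow (M i : ℕ) (y : R) :
    ∑ r ∈ range (M + 1),
        (M.choose r : R) * ((Ring.choose ((r : ℤ) - 2) i : ℤ) : R) * y ^ (M - r) =
      ∑ a ∈ range (i + 1),
        (-1) ^ (i - a) * ((i - a : ℕ) + 1) * M.choose a * (1 + y) ^ (M - a) := by
  simp only [Ring.choose_natCast_sub_two, Int.cast_sum, mul_sum, sum_mul]
  rw [sum_comm]
  refine sum_congr rfl fun a _ => ?_
  rw [mul_assoc _ (M.choose a : R), ← sum_range_choose_mul_choose_mul_pow, mul_sum]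
  refine sum_congr rfl fun r _ => ?_
  push_cast
  ring

theorem sum_range_choose_add_two_mul_choose_mul_pow (m i : ℕ) (y : R) :
    ∑ r ∈ range m, ((m + 1).choose (r + 2) * r.choose i : R) * y ^ (m - 1 - r) =
      ∑ a ∈ range (i + 1),
          (-1) ^ (i - a) * ((i - a : ℕ) + 1) * (m + 1).choose a * (1 + y) ^ (m + 1 - a)
        - (-1) ^ i * (i + 1) * y ^ (m + 1) - (-1) ^ i * (m + 1) * y ^ m := by
  rw [← sum_range_choose_mul_choose_sub_two_mul_pow, sum_range_succ', sum_range_succ']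
  have h₂ (r : ℕ) : Ring.choose (((r + 1 + 1 : ℕ) : ℤ) - 2) i = r.choose i := by
    rw [show ((r + 1 + 1 : ℕ) : ℤ) - 2 = r by push_cast; ring, Ring.choose_natCast]
  have h₁ : Ring.choose (((0 + 1 : ℕ) : ℤ) - 2) i = (-1) ^ i := by
    have h := Ring.choose_neg (1 : ℤ) i
    rw [add_sub_cancel_left, Ring.choose_natCast, Nat.choose_self, Units.smul_def,
      Int.coe_negOnePow_natCast] at h
    rw [show ((0 + 1 : ℕ) - 2 : ℤ) = -1 by norm_num, h, Nat.cast_one, smul_eq_mul, mul_one]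
  have h₀ : Ring.choose (((0 : ℕ) : ℤ) - 2) i = (-1) ^ i * (i + 1) := by
    rw [Nat.cast_zero, zero_sub, Ring.choose_neg_two]
  have hexp : ∀ r ∈ range m,
      ((m + 1).choose (r + 1 + 1) : R) * (r.choose i : ℤ) * y ^ (m + 1 - (r + 1 + 1)) =
        ((m + 1).choose (r + 2) * r.choose i : R) * y ^ (m - 1 - r) := fun r _ => by
    rw [show m + 1 - (r + 1 + 1) = m - 1 - r by omega]
    push_cast
    ring
  rw [h₁, h₀]
  simp only [h₂]
  rw [sum_congr rfl hexp, zero_add, Nat.choose_one_right, Nat.choose_zero_right, Nat.add_sub_cancel,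
    Nat.sub_zero]
  push_cast
  ring

end CommRing

theorem cKL_eq_zero_of_le {k i : ℕ} (hk : 2 ≤ k) (hki : k ≤ i + 1) : cKL k i = 0 := by
  rw [cKL, show k - i - 2 = 0 by omega, Nat.choose_eq_zero_of_lt (by omega : 0 < i)]
  simp

section Field

variable {K : Type*} [Field K]

theorem sum_Icc_choose_mul_pow_mul_sum_cKL (n : ℕ) (x : K) :
    ∑ k ∈ Icc 2 n,
        (n.choose k : K) * ((x - 1) ^ (n - k) * ∑ i ∈ range k, (cKL k i : K) * x ^ i) =
      ∑ i ∈ range n,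
        x ^ i * ∑ k ∈ Icc 2 n, (n.choose k : K) * cKL k i * (x - 1) ^ (n - k) := by
  have hext : ∀ k ∈ Icc 2 n,
      ∑ i ∈ range k, (cKL k i : K) * x ^ i = ∑ i ∈ range n, (cKL k i : K) * x ^ i := by
    intro k hk
    rw [mem_Icc] at hk
    refine sum_subset (range_subset_range.2 hk.2) fun i _ hi => ?_
    rw [mem_range, not_lt] at hi
    rw [cKL_eq_zero_of_le hk.1 (by omega), Rat.cast_zero, zero_mul]
  rw [sum_congr rfl fun k hk => by rw [hext k hk]]
  simp only [mul_sum]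
  rw [sum_comm]
  refine sum_congr rfl fun i _ => sum_congr rfl fun k _ => ?_
  ring

variable [CharZero K]

theorem sum_range_choose_mul_choose_mul_div_eq_cKL {n j : ℕ} (hj : j + 1 < n) :
    ∑ b ∈ range (n - (j + 1)), (n.choose (j + 1 + b) * (n - (j + 1 + b)).choose (j + 1) : K) *
      ((-1) ^ b * (b + 1) / ((j + 1 + b : ℕ) + 1)) = cKL n j := by
  obtain ⟨m, rfl⟩ : ∃ m, n = j + 2 + m := ⟨n - (j + 2), by omega⟩
  have hN : j + 2 + m - (j + 1) = m + 1 := by omega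
  have hm : ((m + 1 : ℕ) : K) + 1 ≠ 0 := Nat.cast_add_one_ne_zero _
  have hterm : ∀ b ∈ range (m + 1),
      ((j + 2 + m).choose (j + 1 + b) * (j + 2 + m - (j + 1 + b)).choose (j + 1) : K) *
        ((-1) ^ b * (b + 1) / ((j + 1 + b : ℕ) + 1)) =
      (j + 2 + m).choose (j + 1) * ((-1) ^ b * ((m + 1).choose (j + 1 + b) : K) -
        (j + 1) / ((m + 1 : ℕ) + 1) *
          ((-1) ^ b * ((m + 1 + 1).choose (j + 1 + 1 + b) : K))) := by
    intro b _
    rw [← Nat.cast_mul, Nat.choose_mul_choose_sub_comm, hN, Nat.cast_mul]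
    have h : ((m + 1 + 1).choose (j + 1 + 1 + b) : K) =
        ((m + 1 : ℕ) + 1) * (m + 1).choose (j + 1 + b) / ((j + 1 + b : ℕ) + 1) := by
      rw [eq_div_iff (Nat.cast_add_one_ne_zero _), add_right_comm j 1 1, add_right_comm (j + 1) 1 b]
      exact_mod_cast (Nat.add_one_mul_choose_eq (m + 1) (j + 1 + b)).symm
    have hb := Nat.cast_add_one_ne_zero (R := K) (j + 1 + b)
    push_cast at hb
    rw [h]
    push_cast at hm ⊢
    field_simp
    ring
  rw [hN, sum_congr rfl hterm, ← mul_sum, sum_sub_distrib, ← mul_sum,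
    sum_range_neg_one_pow_mul_choose_succ, sum_range_neg_one_pow_mul_choose_succ,
    Nat.choose_eq_zero_of_lt (by omega : m < j + (m + 1)),
    Nat.choose_eq_zero_of_lt (by omega : m + 1 < j + 1 + (m + 1))]
  have e₁ : ((j + 2 + m).choose (j + 1) : K) =
      (j + 2 + m).choose j * ((m + 1 : ℕ) + 1) / (j + 1) := by
    rw [eq_div_iff (Nat.cast_add_one_ne_zero j)]
    have := Nat.choose_succ_right_eq (j + 2 + m) j
    rw [show j + 2 + m - j = m + 1 + 1 by omega] at this
    exact_mod_cast this
  have e₂ : ((m + 1).choose (j + 1) : K) = (m + 1) * m.choose j / (j + 1) := by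
    rw [eq_div_iff (Nat.cast_add_one_ne_zero j)]
    exact_mod_cast (Nat.add_one_mul_choose_eq m j).symm
  have hj1 : (j : K) + 1 ≠ 0 := Nat.cast_add_one_ne_zero j
  rw [cKL, show j + 2 + m - j - 2 = m by omega, e₁, e₂]
  push_cast at hm ⊢
  field_simp
  ring

theorem sum_Icc_choose_mul_cKL_mul_pow {n i : ℕ} (hi : i < n) (y : K) :
    ∑ k ∈ Icc 2 n, (n.choose k : K) * cKL k i * y ^ (n - k) =
      n.choose i / (i + 1) *
        ∑ r ∈ range (n - i - 1),
          ((n - i).choose (r + 2) * r.choose i : K) * y ^ (n - i - 2 - r) := by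
  obtain ⟨m, rfl⟩ : ∃ m, n = i + 1 + m := ⟨n - i - 1, by omega⟩
  have hsub : Ico (i + 2) (i + 1 + m + 1) ⊆ Icc 2 (i + 1 + m) := fun k hk => by
    simp only [mem_Ico, mem_Icc] at hk ⊢; omega
  rw [← sum_subset hsub fun k hk hk' => by
      simp only [mem_Ico, mem_Icc, not_and, not_lt] at hk hk'
      rw [cKL_eq_zero_of_le hk.1 (by omega)]; simp,
    sum_Ico_eq_sum_range, show i + 1 + m + 1 - (i + 2) = m by omega,
    show i + 1 + m - i - 1 = m by omega, mul_sum]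
  refine sum_congr rfl fun r hr => ?_
  have hc := Nat.choose_mul (n := i + 1 + m) (Nat.le_add_right i (2 + r))
  rw [show i + (2 + r) - i = r + 2 by omega] at hc
  have hc' : ((i + 1 + m).choose (i + 2 + r) * (i + 2 + r).choose i : K) =
      (i + 1 + m).choose i * (i + 1 + m - i).choose (r + 2) := by
    rw [← add_assoc] at hc; exact_mod_cast hc
  have hi1 : (i : K) + 1 ≠ 0 := Nat.cast_add_one_ne_zero i
  rw [cKL, show i + 2 + r - i - 2 = r by omega,
    show i + 1 + m - (i + 2 + r) = i + 1 + m - i - 2 - r by omega]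
  push_cast
  field_simp
  linear_combination (r.choose i : K) * (y ^ (i + 1 + m - i - 2 - r)) * hc'

theorem pow_mul_sum_Icc_choose_mul_cKL_mul_pow {n i : ℕ} (hi : i < n) (x : K) :
    x ^ i * ∑ k ∈ Icc 2 n, (n.choose k : K) * cKL k i * (x - 1) ^ (n - k) =
      n.choose i / (i + 1) *
          (x ^ i * ∑ a ∈ range (i + 1),
            (-1) ^ (i - a) * ((i - a : ℕ) + 1) * (n - i).choose a * x ^ (n - i - a))
        - n.choose i * (-x) ^ i * (x - 1) ^ (n - i)
        - n.choose (i + 1) * (-x) ^ i * (x - 1) ^ (n - 1 - i) := by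
  have hc := Nat.choose_succ_right_eq n i
  rw [sum_Icc_choose_mul_cKL_mul_pow hi]
  obtain ⟨m, rfl⟩ : ∃ m, n = i + 1 + m := ⟨n - i - 1, by omega⟩
  have hc' : ((i + 1 + m).choose (i + 1) : K) * (i + 1) = (i + 1 + m).choose i * (m + 1) := by
    rw [show i + 1 + m - i = m + 1 by omega] at hc; exact_mod_cast hc
  rw [show i + 1 + m - i - 1 = m by omega, show i + 1 + m - i = m + 1 by omega,
    show i + 1 + m - 1 - i = m by omega]
  simp only [show ∀ r, m + 1 - 2 - r = m - 1 - r from fun r => by omega]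
  rw [sum_range_choose_add_two_mul_choose_mul_pow, add_sub_cancel, neg_pow]
  have hi1 : (i : K) + 1 ≠ 0 := Nat.cast_add_one_ne_zero i
  field_simp
  linear_combination (-1) ^ i * x ^ i * (x - 1) ^ m * hc'

theorem sum_range_choose_div_mul_pow_mul_sum (n : ℕ) (hn : 2 ≤ n) (x : K) :
    ∑ i ∈ range n, n.choose i / (i + 1) *
        (x ^ i * ∑ a ∈ range (i + 1),
          (-1) ^ (i - a) * ((i - a : ℕ) + 1) * (n - i).choose a * x ^ (n - i - a)) =
      ∑ i ∈ range n, (cKL n i : K) * x ^ (n - 1 - i) - (-x) ^ n := by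
  set f : ℕ → ℕ → K := fun a b => (n.choose (a + b) * (n - (a + b)).choose a : K) *
    ((-1) ^ b * (b + 1) / ((a + b : ℕ) + 1)) * x ^ (n - a) with hf
  have hterm : ∀ i ∈ range n, n.choose i / (i + 1) *
      (x ^ i * ∑ a ∈ range (i + 1),
        (-1) ^ (i - a) * ((i - a : ℕ) + 1) * (n - i).choose a * x ^ (n - i - a)) =
      ∑ a ∈ range (i + 1), f a (i - a) := by
    intro i hi
    rw [mul_sum, mul_sum]
    refine sum_congr rfl fun a ha => ?_
    rw [mem_range] at hi ha
    simp only [hf]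
    rw [Nat.add_sub_cancel' (by omega : a ≤ i)]
    rcases le_or_gt a (n - i) with han | han
    · rw [show n - a = i + (n - i - a) by omega, pow_add]
      ring
    · rw [Nat.choose_eq_zero_of_lt han]
      simp
  obtain ⟨n, rfl⟩ : ∃ n', n = n' + 1 := ⟨n - 1, by omega⟩
  rw [sum_congr rfl hterm, sum_range_diag_flip, sum_range_succ', sum_range_succ _ n,
    cKL_eq_zero_of_le hn le_rfl, Rat.cast_zero, zero_mul, add_zero]
  have hzero : ∑ b ∈ range (n + 1 - 0), f 0 b = -(-x) ^ (n + 1) := by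
    have hb (b : ℕ) : f 0 b = (-1) ^ b * (n + 1).choose b * x ^ (n + 1) := by
      have := Nat.cast_add_one_ne_zero (R := K) b
      simp only [hf, zero_add, Nat.sub_zero, Nat.choose_zero_right, Nat.cast_one, mul_one]
      field_simp
    rw [Nat.sub_zero, sum_congr rfl fun b _ => hb b, ← sum_mul,
      sum_range_neg_one_pow_mul_choose (by omega), neg_pow x]
    ring
  have hsucc : ∀ j ∈ range n, ∑ b ∈ range (n + 1 - (j + 1)), f (j + 1) b =
      (cKL (n + 1) j : K) * x ^ (n - j) := by
    intro j hj
    simp only [hf, ← sum_mul]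
    rw [sum_range_choose_mul_choose_mul_div_eq_cKL (by have := mem_range.1 hj; omega),
      Nat.add_sub_add_right]
  rw [hzero, sum_congr rfl hsucc, Nat.add_sub_cancel]
  ring

theorem sum_range_cKL_mul_pow_eq (n : ℕ) (hn : 2 ≤ n) (x : K) :
    ∑ i ∈ range n, (cKL n i : K) * x ^ (n - 1 - i) =
      ∑ j ∈ range n, (-1) ^ j * (n.choose j : K) * (x ^ (n - j - 1) - 1)
      + ∑ k ∈ Icc 2 n,
          (n.choose k : K) * ((x - 1) ^ (n - k) * ∑ i ∈ range k, (cKL k i : K) * x ^ i) := by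
  rw [sum_Icc_choose_mul_pow_mul_sum_cKL,
    sum_congr rfl fun i hi => pow_mul_sum_Icc_choose_mul_cKL_mul_pow (mem_range.1 hi) x,
    sum_sub_distrib, sum_sub_distrib, sum_range_choose_div_mul_pow_mul_sum n hn,
    sum_range_choose_mul_neg_pow_mul_sub_one_pow, sum_range_choose_succ_mul_neg_pow_mul_sub_one_pow]
  simp only [mul_sub, mul_one, sum_sub_distrib]
  rw [sum_range_neg_one_pow_mul_choose (by omega)]
  ring

end Field

theorem T_one_pow_pred_mul_PKL_T_neg_one (n : ℕ) :
    (T 1 : LaurentPolynomial ℚ) ^ (n - 1) * PKL n (T (-1)) =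
      ∑ i ∈ range n, cKL n i • (T 1 : LaurentPolynomial ℚ) ^ (n - 1 - i) := by
  rw [PKL, mul_sum]
  refine sum_congr rfl fun i hi => ?_
  rw [mul_smul_comm, T_pow, T_pow, T_pow, ← T_add]
  congr 2
  push_cast [Nat.cast_sub (by have := mem_range.1 hi; omega : i ≤ n - 1)]
  ring

/-- For all `n ≥ 2`, the palindromic defect identity of Laurent polynomials in `t`:
`t^{n-1}·P_n(1/t) = Σ_{j=0}^{n-1} (-1)^j·C(n,j)·(t^{n-j-1} - 1)
  + Σ_{k=2}^{n} C(n,k)·(t-1)^{n-k}·P_k(t)`. -/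
theorem stmt_17 (n : ℕ) (hn : 2 ≤ n) :
    (T 1 : LaurentPolynomial ℚ) ^ (n - 1) * PKL n (T (-1)) =
      (∑ j ∈ Finset.range n,
        ((-1 : ℚ) ^ j * (Nat.choose n j : ℚ)) • ((T 1 : LaurentPolynomial ℚ) ^ (n - j - 1) - 1))
      + ∑ k ∈ Finset.Icc 2 n,
        (Nat.choose n k : ℚ) • (((T 1 : LaurentPolynomial ℚ) - 1) ^ (n - k) * PKL k (T 1)) := by
  have : CharZero (FractionRing ℚ[T;T⁻¹]) := algebraRat.charZero _
  have hcast (q : ℚ) :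
      algebraMap ℚ[T;T⁻¹] (FractionRing ℚ[T;T⁻¹]) (algebraMap ℚ ℚ[T;T⁻¹] q) = q :=
    eq_ratCast ((algebraMap ℚ[T;T⁻¹] (FractionRing ℚ[T;T⁻¹])).comp (algebraMap ℚ _)) q
  apply IsFractionRing.injective ℚ[T;T⁻¹] (FractionRing ℚ[T;T⁻¹])
  rw [T_one_pow_pred_mul_PKL_T_neg_one]
  simp only [PKL, Algebra.smul_def, map_add, map_sum, map_mul, map_pow, map_sub, map_one, hcast]
  push_cast
  exact sum_range_cKL_mul_pow_eq n hn _
end
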